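/- Suppose p divides k_i for every relation R_i ∈ S outside the thin radical O_ϑ(S). If S is a p-transitive scheme, then S equals the complex product O^ϑ(S)O_ϑ(S). -/
import Mathlib


open scoped Classical

/-- An association scheme of class `d` on a nonempty finite set `X`:
a partition of `X × X` into nonempty relations `r 0, …, r d` with
`r 0` the diagonal, closed under converse (`star`), and with
intersection numbers `pNum i j k`. -/
structure AssocScheme (X : Type*) [Fintype X] [Nonempty X] (d : ℕ) where
  r : Fin (d + 1) → Set (X × X)
  r_nonempty : ∀ i, (r i).Nonempty
  existsUnique_rel : ∀ q : X × X, ∃! i, q ∈ r i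
  r_zero : r 0 = {q : X × X | q.1 = q.2}
  star : Fin (d + 1) → Fin (d + 1)
  mem_star : ∀ (i : Fin (d + 1)) (q : X × X), q ∈ r (star i) ↔ (q.2, q.1) ∈ r i
  pNum : Fin (d + 1) → Fin (d + 1) → Fin (d + 1) → ℕ
  ncard_eq : ∀ (i j k : Fin (d + 1)), ∀ q ∈ r k,
    {z : X | (q.1, z) ∈ r i ∧ (z, q.2) ∈ r j}.ncard = pNum i j k

namespace AssocScheme

variable {X : Type*} [Fintype X] [Nonempty X] {d : ℕ}

/-- The valency `k_i = p_{i i*}^0` of the relation `R_i`. -/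
def val (S : AssocScheme X d) (i : Fin (d + 1)) : ℕ := S.pNum i (S.star i) 0

/-- The complex product `UV = {R_k : p_{uv}^k > 0 for some R_u ∈ U, R_v ∈ V}`. -/
def cmul (S : AssocScheme X d) (U V : Set (Fin (d + 1))) : Set (Fin (d + 1)) :=
  {k | ∃ u ∈ U, ∃ v ∈ V, 0 < S.pNum u v k}

/-- A nonempty subset `T` is closed if `T*T ⊆ T`. -/
def IsClosedSubset (S : AssocScheme X d) (T : Set (Fin (d + 1))) : Prop :=
  T.Nonempty ∧ S.cmul (S.star '' T) T ⊆ T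

/-- The thin radical `O_ϑ(S) = {R_i : k_i = 1}`. -/
def thinRadical (S : AssocScheme X d) : Set (Fin (d + 1)) := {i | S.val i = 1}

/-- A closed subset `T` is strongly normal if `R_{i*} T R_i ⊆ T` for all `i`. -/
def IsStronglyNormal (S : AssocScheme X d) (T : Set (Fin (d + 1))) : Prop :=
  S.IsClosedSubset T ∧ ∀ i : Fin (d + 1), S.cmul (S.cmul {S.star i} T) {i} ⊆ T

/-- The thin residue `O^ϑ(S)`: the intersection of all strongly normal closed subsets. -/
def thinResidue (S : AssocScheme X d) : Set (Fin (d + 1)) :=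
  ⋂₀ {T | S.IsStronglyNormal T}

/-- `⟨H⟩`: the intersection of all closed subsets containing `H`. -/
def closure (S : AssocScheme X d) (H : Set (Fin (d + 1))) : Set (Fin (d + 1)) :=
  ⋂₀ {T | S.IsClosedSubset T ∧ H ⊆ T}

/-- The adjacency matrix `A̅_i` of `R_i`, with entries in `𝔽`. -/
noncomputable def adj (S : AssocScheme X d) (𝔽 : Type*) [Field 𝔽] (i : Fin (d + 1)) :
    Matrix X X 𝔽 :=
  Matrix.of fun x y => if (x, y) ∈ S.r i then 1 else 0

/-- `v` spans a trivial `𝔽S`-submodule of the regular `𝔽S`-module: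
`v` is a nonzero element of `𝔽S` with `A̅_i v = k̅_i v` for all `i`. -/
def IsTrivialVector (S : AssocScheme X d) (𝔽 : Type*) [Field 𝔽] (v : Matrix X X 𝔽) : Prop :=
  v ≠ 0 ∧ v ∈ Submodule.span 𝔽 (Set.range (S.adj 𝔽)) ∧
    ∀ i : Fin (d + 1), S.adj 𝔽 i * v = (S.val i : 𝔽) • v

/-- `S` is `p`-transitive over `𝔽` (of characteristic `p`) if the regular `𝔽S`-module
contains a unique trivial `𝔽S`-submodule. -/
def IsPTransitive (S : AssocScheme X d) (𝔽 : Type*) [Field 𝔽] : Prop :=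
  ∃! W : Submodule 𝔽 (Matrix X X 𝔽),
    ∃ v : Matrix X X 𝔽, S.IsTrivialVector 𝔽 v ∧ W = Submodule.span 𝔽 {v}

/-- A subset `T ⊆ S` is singular if `O_ϑ(S) ⊆ T` and
`R_x R_{y*} R_y R_z ⊆ T` for all `R_x ∈ O_ϑ(S)`, `R_y ∈ S`, `R_z ∈ T`. -/
def IsSingular (S : AssocScheme X d) (T : Set (Fin (d + 1))) : Prop :=
  S.thinRadical ⊆ T ∧ ∀ x ∈ S.thinRadical, ∀ y : Fin (d + 1), ∀ z ∈ T,
    S.cmul (S.cmul (S.cmul {x} {S.star y}) {y}) {z} ⊆ T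

/-- `S_{p'} = {R_i ∈ S : p ∤ k_i}`. -/
def pPrimePart (S : AssocScheme X d) (p : ℕ) : Set (Fin (d + 1)) :=
  {i | ¬ p ∣ S.val i}


set_option linter.unusedSectionVars false
variable (S : AssocScheme X d)

/-- The unique index of the relation containing a pair. -/
noncomputable def idx (q : X × X) : Fin (d + 1) :=
  (S.existsUnique_rel q).choose

lemma mem_r_idx (q : X × X) : q ∈ S.r (S.idx q) :=
  (S.existsUnique_rel q).choose_spec.1

lemma idx_eq {q : X × X} {i : Fin (d + 1)} (h : q ∈ S.r i) : S.idx q = i :=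
  ((S.existsUnique_rel q).choose_spec.2 i h).symm

lemma rel_eq {q : X × X} {i j : Fin (d + 1)} (hi : q ∈ S.r i) (hj : q ∈ S.r j) : i = j :=
  (S.idx_eq hi).symm.trans (S.idx_eq hj)

lemma mem_r_zero (x : X) : (x, x) ∈ S.r 0 := by
  rw [S.r_zero]; exact rfl

lemma idx_diag (x : X) : S.idx (x, x) = 0 := S.idx_eq (S.mem_r_zero x)

lemma pNum_pos {i j k : Fin (d + 1)} {x y z : X} (hk : (x, y) ∈ S.r k)
    (h1 : (x, z) ∈ S.r i) (h2 : (z, y) ∈ S.r j) : 0 < S.pNum i j k := by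
  rw [← S.ncard_eq i j k (x, y) hk]
  exact (Set.ncard_pos (Set.toFinite _)).mpr ⟨z, h1, h2⟩

lemma exists_mid {i j k : Fin (d + 1)} {x y : X} (hk : (x, y) ∈ S.r k)
    (h : 0 < S.pNum i j k) : ∃ z : X, (x, z) ∈ S.r i ∧ (z, y) ∈ S.r j := by
  rw [← S.ncard_eq i j k (x, y) hk] at h
  exact (Set.ncard_pos (Set.toFinite _)).mp h

lemma star_star (i : Fin (d + 1)) : S.star (S.star i) = i := by
  obtain ⟨q, hq⟩ := S.r_nonempty i
  have h : q ∈ S.r (S.star (S.star i)) := by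
    rw [S.mem_star, S.mem_star]
    simpa using hq
  exact S.rel_eq h hq

lemma card_rel (i : Fin (d + 1)) (x : X) : {z : X | (x, z) ∈ S.r i}.ncard = S.val i := by
  have h := S.ncard_eq i (S.star i) 0 (x, x) (S.mem_r_zero x)
  rw [val, ← h]
  congr 1
  ext z
  simp only [Set.mem_setOf_eq, S.mem_star, and_self]

lemma val_pos (i : Fin (d + 1)) : 0 < S.val i := by
  obtain ⟨⟨a, b⟩, hab⟩ := S.r_nonempty i
  rw [← S.card_rel i a]
  exact (Set.ncard_pos (Set.toFinite _)).mpr ⟨b, hab⟩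

lemma card_rel' (i : Fin (d + 1)) (y : X) :
    {z : X | (z, y) ∈ S.r i}.ncard = S.val (S.star i) := by
  rw [← S.card_rel (S.star i) y]
  congr 1
  ext z
  simp only [Set.mem_setOf_eq, S.mem_star]

lemma ncard_filter (P : X → Prop) :
    (Finset.univ.filter P).card = Set.ncard {z : X | P z} := by
  classical
  rw [show {z : X | P z} = ((Finset.univ.filter P : Finset X) : Set X) by ext z; simp,
    Set.ncard_coe_finset]

lemma card_xrow (i : Fin (d + 1)) (x : X) :
    (Finset.univ.filter (fun z : X => (x, z) ∈ S.r i)).card = S.val i := by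
  rw [ncard_filter, S.card_rel]

lemma card_ycol (i : Fin (d + 1)) (y : X) :
    (Finset.univ.filter (fun z : X => (z, y) ∈ S.r i)).card = S.val (S.star i) := by
  rw [ncard_filter, S.card_rel']

lemma val_star (i : Fin (d + 1)) : S.val (S.star i) = S.val i := by
  classical
  have h1 : (Finset.univ.filter (fun q : X × X => q ∈ S.r i)).card
      = Fintype.card X * S.val i := by
    rw [Finset.card_eq_sum_card_fiberwise (f := Prod.fst) (t := Finset.univ)
      (fun q _ => Finset.mem_univ _)]
    rw [Finset.sum_congr rfl (fun x _ => ?_), Finset.sum_const, Finset.card_univ, smul_eq_mul]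
    rw [← S.card_xrow i x]
    apply Finset.card_bij (fun q _ => q.2)
    · intro q hq
      simp only [Finset.mem_filter, Finset.mem_univ, true_and] at hq ⊢
      obtain ⟨hq1, hq2⟩ := hq
      rw [← hq2]
      exact hq1
    · intro q1 hq1 q2 hq2 h
      simp only [Finset.mem_filter] at hq1 hq2
      obtain ⟨x1, y1⟩ := q1
      obtain ⟨x2, y2⟩ := q2
      simp only at h hq1 hq2
      rw [h, hq1.2, hq2.2]
    · intro z hz
      simp only [Finset.mem_filter, Finset.mem_univ, true_and] at hz
      exact ⟨(x, z), by simp [hz], rfl⟩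
  have h2 : (Finset.univ.filter (fun q : X × X => q ∈ S.r i)).card
      = Fintype.card X * S.val (S.star i) := by
    rw [Finset.card_eq_sum_card_fiberwise (f := Prod.snd) (t := Finset.univ)
      (fun q _ => Finset.mem_univ _)]
    rw [Finset.sum_congr rfl (fun y _ => ?_), Finset.sum_const, Finset.card_univ, smul_eq_mul]
    rw [← S.card_ycol i y]
    apply Finset.card_bij (fun q _ => q.1)
    · intro q hq
      simp only [Finset.mem_filter, Finset.mem_univ, true_and] at hq ⊢
      obtain ⟨hq1, hq2⟩ := hq
      rw [← hq2]
      exact hq1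
    · intro q1 hq1 q2 hq2 h
      simp only [Finset.mem_filter] at hq1 hq2
      obtain ⟨x1, y1⟩ := q1
      obtain ⟨x2, y2⟩ := q2
      simp only at h hq1 hq2
      rw [h, hq1.2, hq2.2]
    · intro z hz
      simp only [Finset.mem_filter, Finset.mem_univ, true_and] at hz
      exact ⟨(z, y), by simp [hz], rfl⟩
  exact Nat.eq_of_mul_eq_mul_left Fintype.card_pos (h2.symm.trans h1)

lemma pNum_zero_right (i : Fin (d + 1)) : 0 < S.pNum i 0 i := by
  obtain ⟨⟨x, y⟩, hxy⟩ := S.r_nonempty i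
  exact S.pNum_pos hxy hxy (S.mem_r_zero y)

lemma pNum_zero_left (i : Fin (d + 1)) : 0 < S.pNum 0 i i := by
  obtain ⟨⟨x, y⟩, hxy⟩ := S.r_nonempty i
  exact S.pNum_pos hxy (S.mem_r_zero x) hxy

lemma zero_mem_closed {T : Set (Fin (d + 1))} (hT : S.IsClosedSubset T) :
    (0 : Fin (d + 1)) ∈ T := by
  obtain ⟨⟨t, ht⟩, hcl⟩ := hT
  obtain ⟨⟨x, y⟩, hxy⟩ := S.r_nonempty t
  exact hcl ⟨S.star t, ⟨t, ht, rfl⟩, t, ht,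
    S.pNum_pos (S.mem_r_zero y) ((S.mem_star t (y, x)).mpr hxy) hxy⟩

lemma star_mem_closed {T : Set (Fin (d + 1))} (hT : S.IsClosedSubset T)
    {t : Fin (d + 1)} (ht : t ∈ T) : S.star t ∈ T :=
  hT.2 ⟨S.star t, ⟨t, ht, rfl⟩, 0, S.zero_mem_closed hT, S.pNum_zero_right _⟩

lemma mul_mem_closed {T : Set (Fin (d + 1))} (hT : S.IsClosedSubset T)
    {i j k : Fin (d + 1)} (hi : i ∈ T) (hj : j ∈ T) (h : 0 < S.pNum i j k) : k ∈ T :=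
  hT.2 ⟨i, ⟨S.star i, S.star_mem_closed hT hi, S.star_star i⟩, j, hj, h⟩

lemma mem_thinResidue {k : Fin (d + 1)} :
    k ∈ S.thinResidue ↔ ∀ T, S.IsStronglyNormal T → k ∈ T := Set.mem_sInter

lemma thinResidue_isStronglyNormal : S.IsStronglyNormal S.thinResidue := by
  constructor
  · constructor
    · exact ⟨0, S.mem_thinResidue.mpr fun T hT => S.zero_mem_closed hT.1⟩
    · intro k hk
      rw [S.mem_thinResidue]
      intro T hT
      obtain ⟨s, ⟨m, hm, rfl⟩, t, ht, hp⟩ := hk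
      exact hT.1.2 ⟨S.star m, ⟨m, S.mem_thinResidue.mp hm T hT, rfl⟩,
        t, S.mem_thinResidue.mp ht T hT, hp⟩
  · intro i k hk
    rw [S.mem_thinResidue]
    intro T hT
    obtain ⟨g, ⟨s, hs, u, hu, hq⟩, i', hi', hp⟩ := hk
    exact hT.2 i ⟨g, ⟨s, hs, u, S.mem_thinResidue.mp hu T hT, hq⟩, i', hi', hp⟩

lemma thinResidue_closed : S.IsClosedSubset S.thinResidue :=
  S.thinResidue_isStronglyNormal.1

lemma zero_mem_thinResidue : (0 : Fin (d + 1)) ∈ S.thinResidue :=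
  S.zero_mem_closed S.thinResidue_closed

lemma sq_mem_thinResidue {j e : Fin (d + 1)} (h : 0 < S.pNum (S.star j) j e) :
    e ∈ S.thinResidue := by
  apply S.thinResidue_isStronglyNormal.2 j
  exact ⟨S.star j, ⟨S.star j, rfl, 0, S.zero_mem_thinResidue, S.pNum_zero_right _⟩,
    j, rfl, h⟩

lemma zero_mem_thinRadical : (0 : Fin (d + 1)) ∈ S.thinRadical := by
  have x : X := Classical.arbitrary X
  show S.val 0 = 1
  rw [← S.card_rel 0 x, show {z : X | (x, z) ∈ S.r 0} = {x} from by
    ext z; simp [S.r_zero, eq_comm]]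
  exact Set.ncard_singleton x

lemma thin_mul {a b c : Fin (d + 1)} (ha : a ∈ S.thinRadical) (hb : b ∈ S.thinRadical)
    (h : 0 < S.pNum a b c) : c ∈ S.thinRadical := by
  obtain ⟨⟨x0, y0⟩, hxy0⟩ := S.r_nonempty c
  obtain ⟨z, hz1, hz2⟩ := S.exists_mid hxy0 h
  obtain ⟨y', hy'⟩ : ∃ y', {w : X | (z, w) ∈ S.r b} = {y'} := by
    apply Set.ncard_eq_one.mp
    rw [S.card_rel]; exact hb
  have hXa : {w : X | (x0, w) ∈ S.r a} = {z} := by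
    obtain ⟨z', hz'⟩ : ∃ z', {w : X | (x0, w) ∈ S.r a} = {z'} := by
      apply Set.ncard_eq_one.mp
      rw [S.card_rel]; exact ha
    have : z ∈ {w : X | (x0, w) ∈ S.r a} := hz1
    rw [hz'] at this ⊢
    rw [this]
  have hsub : {w : X | (x0, w) ∈ S.r c} ⊆ {y'} := by
    intro w hw
    obtain ⟨z', hz1', hz2'⟩ := S.exists_mid (hw : (x0, w) ∈ S.r c) h
    have hz'z : z' = z := by
      have : z' ∈ {w : X | (x0, w) ∈ S.r a} := hz1'
      rwa [hXa] at this
    rw [hz'z] at hz2'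
    have : w ∈ {w : X | (z, w) ∈ S.r b} := hz2'
    rwa [hy'] at this
  show S.val c = 1
  have hle : {w : X | (x0, w) ∈ S.r c}.ncard ≤ 1 := by
    simpa using Set.ncard_le_ncard hsub (Set.toFinite _)
  rw [S.card_rel c x0] at hle
  have := S.val_pos c
  omega

lemma thinResidue_subset_TT :
    S.thinResidue ⊆ S.cmul S.thinResidue S.thinRadical := fun u hu =>
  ⟨u, hu, 0, S.zero_mem_thinRadical, S.pNum_zero_right u⟩

lemma thinRadical_subset_TT :
    S.thinRadical ⊆ S.cmul S.thinResidue S.thinRadical := fun a ha =>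
  ⟨0, S.zero_mem_thinResidue, a, ha, S.pNum_zero_left a⟩

lemma TT_closed : S.IsClosedSubset (S.cmul S.thinResidue S.thinRadical) := by
  constructor
  · exact ⟨0, S.thinResidue_subset_TT S.zero_mem_thinResidue⟩
  · intro k hk
    obtain ⟨s, ⟨m, hm, rfl⟩, t, ht, hpk⟩ := hk
    obtain ⟨u, hu, a, ha, hpm⟩ := hm
    obtain ⟨u', hu', a', ha', hpt⟩ := ht
    obtain ⟨⟨x, y⟩, hxy⟩ := S.r_nonempty k
    obtain ⟨z, hz1, hz2⟩ := S.exists_mid hxy hpk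
    have hzx : (z, x) ∈ S.r m := (S.mem_star m (x, z)).mp hz1
    obtain ⟨w, hw1, hw2⟩ := S.exists_mid hzx hpm
    obtain ⟨v, hv1, hv2⟩ := S.exists_mid hz2 hpt
    have hwz : (w, z) ∈ S.r (S.star u) := (S.mem_star u (w, z)).mpr hw1
    have he : S.idx (w, v) ∈ S.thinResidue :=
      S.thinResidue_closed.2 ⟨S.star u, ⟨u, hu, rfl⟩, u', hu',
        S.pNum_pos (S.mem_r_idx (w, v)) hwz hv1⟩
    obtain ⟨m0, hm0⟩ : ∃ m0, (v, m0) ∈ S.r a := by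
      have := S.val_pos a
      rw [← S.card_rel a v] at this
      exact (Set.ncard_pos (Set.toFinite _)).mp this
    have hxw : (x, w) ∈ S.r (S.star a) := (S.mem_star a (x, w)).mpr hw2
    have hh : S.idx (x, m0) ∈ S.thinResidue := by
      apply S.thinResidue_isStronglyNormal.2 a
      exact ⟨S.idx (x, v), ⟨S.star a, rfl, S.idx (w, v), he,
          S.pNum_pos (S.mem_r_idx (x, v)) hxw (S.mem_r_idx (w, v))⟩,
        a, rfl, S.pNum_pos (S.mem_r_idx (x, m0)) (S.mem_r_idx (x, v)) hm0⟩
    have hm0v : (m0, v) ∈ S.r (S.star a) := (S.mem_star a (m0, v)).mpr hm0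
    have hc0 : S.idx (m0, y) ∈ S.thinRadical := by
      apply S.thin_mul (a := S.star a) (b := a') _ ha'
        (S.pNum_pos (S.mem_r_idx (m0, y)) hm0v hv2)
      show S.val (S.star a) = 1
      rw [S.val_star]; exact ha
    exact ⟨S.idx (x, m0), hh, S.idx (m0, y), hc0,
      S.pNum_pos hxy (S.mem_r_idx (x, m0)) (S.mem_r_idx (m0, y))⟩

variable (𝔽 : Type*) [Field 𝔽]

/-- The sum of the adjacency matrices over a subset of indices. -/
noncomputable def sigma (T : Set (Fin (d + 1))) : Matrix X X 𝔽 :=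
  ∑ i : Fin (d + 1), if i ∈ T then S.adj 𝔽 i else 0

lemma sigma_apply (T : Set (Fin (d + 1))) (x y : X) :
    S.sigma 𝔽 T x y = if S.idx (x, y) ∈ T then 1 else 0 := by
  classical
  have h1 : S.sigma 𝔽 T x y
      = ∑ i : Fin (d + 1), if i ∈ T ∧ (x, y) ∈ S.r i then (1 : 𝔽) else 0 := by
    rw [sigma, Matrix.sum_apply]
    refine Finset.sum_congr rfl fun i _ => ?_
    by_cases hiT : i ∈ T
    · by_cases hr : (x, y) ∈ S.r i <;> simp [hiT, hr, adj]
    · simp [hiT]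
  rw [h1, Finset.sum_eq_single (S.idx (x, y))]
  · simp [S.mem_r_idx (x, y)]
  · intro i _ hne
    rw [if_neg]
    rintro ⟨-, hmem⟩
    exact hne (S.idx_eq hmem).symm
  · simp

lemma sigma_mem_span (T : Set (Fin (d + 1))) :
    S.sigma 𝔽 T ∈ Submodule.span 𝔽 (Set.range (S.adj 𝔽)) := by
  apply Submodule.sum_mem
  intro i _
  by_cases h : i ∈ T
  · rw [if_pos h]; exact Submodule.subset_span ⟨i, rfl⟩
  · rw [if_neg h]; exact Submodule.zero_mem _

lemma sigma_trivial (T : Set (Fin (d + 1))) (h0 : (0 : Fin (d + 1)) ∈ T)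
    (hstar : ∀ i ∈ T, S.star i ∈ T)
    (hmul : ∀ i j k : Fin (d + 1), i ∈ T → j ∈ T → 0 < S.pNum i j k → k ∈ T)
    (hsq : ∀ j e : Fin (d + 1), 0 < S.pNum (S.star j) j e → e ∈ T)
    (hdvd : ∀ j : Fin (d + 1), j ∉ T → (S.val j : 𝔽) = 0) :
    S.IsTrivialVector 𝔽 (S.sigma 𝔽 T) := by
  classical
  refine ⟨?_, S.sigma_mem_span 𝔽 T, ?_⟩
  · intro hzero
    have x : X := Classical.arbitrary X
    have h1 : S.sigma 𝔽 T x x = 0 := by rw [hzero]; rfl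
    rw [S.sigma_apply, S.idx_diag, if_pos h0] at h1
    exact one_ne_zero h1
  · intro j
    ext x y
    rw [Matrix.mul_apply, Matrix.smul_apply, smul_eq_mul, S.sigma_apply]
    have hL : ∀ z : X, S.adj 𝔽 j x z * S.sigma 𝔽 T z y
        = if (x, z) ∈ S.r j ∧ S.idx (z, y) ∈ T then 1 else 0 := by
      intro z
      rw [S.sigma_apply]
      by_cases h1 : (x, z) ∈ S.r j <;> by_cases h2 : S.idx (z, y) ∈ T <;>
        simp [adj, h1, h2]
    rw [Finset.sum_congr rfl fun z _ => hL z, Finset.sum_boole]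
    by_cases hkT : S.idx (x, y) ∈ T
    · rw [if_pos hkT, mul_one]
      by_cases hjT : j ∈ T
      · have hfe : (Finset.univ.filter fun z : X => (x, z) ∈ S.r j ∧ S.idx (z, y) ∈ T)
            = Finset.univ.filter fun z : X => (x, z) ∈ S.r j := by
          apply Finset.filter_congr
          intro z _
          simp only [and_iff_left_iff_imp]
          intro hz
          exact hmul _ _ _ (hstar j hjT) hkT (S.pNum_pos (S.mem_r_idx (z, y))
            ((S.mem_star j (z, x)).mpr hz) (S.mem_r_idx (x, y)))
        rw [hfe, S.card_xrow]
      · have hfe : (Finset.univ.filter fun z : X => (x, z) ∈ S.r j ∧ S.idx (z, y) ∈ T)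
            = ∅ := by
          apply Finset.filter_false_of_mem
          rintro z - ⟨hz1, hz2⟩
          exact hjT (hmul _ _ _ hkT (hstar _ hz2) (S.pNum_pos hz1 (S.mem_r_idx (x, y))
            ((S.mem_star _ (y, z)).mpr (S.mem_r_idx (z, y)))))
        rw [hfe, hdvd j hjT]
        simp
    · rw [if_neg hkT, mul_zero]
      by_cases hne : ∃ z : X, (x, z) ∈ S.r j ∧ S.idx (z, y) ∈ T
      · obtain ⟨z0, hz0a, hz0b⟩ := hne
        have hjT : j ∉ T := fun hj => hkT (hmul _ _ _ hj hz0b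
          (S.pNum_pos (S.mem_r_idx (x, y)) hz0a (S.mem_r_idx (z0, y))))
        have hfe : (Finset.univ.filter fun z : X => (x, z) ∈ S.r j ∧ S.idx (z, y) ∈ T)
            = Finset.univ.filter fun z : X => (x, z) ∈ S.r j := by
          apply Finset.filter_congr
          intro z _
          simp only [and_iff_left_iff_imp]
          intro hz
          have hzz0 : S.idx (z0, z) ∈ T := hsq j _ (S.pNum_pos (S.mem_r_idx (z0, z))
            ((S.mem_star j (z0, x)).mpr hz0a) hz)
          have hz0z : S.idx (z, z0) ∈ T := by
            have heq : S.idx (z, z0) = S.star (S.idx (z0, z)) :=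
              S.idx_eq ((S.mem_star _ (z, z0)).mpr (S.mem_r_idx (z0, z)))
            rw [heq]
            exact hstar _ hzz0
          exact hmul _ _ _ hz0z hz0b (S.pNum_pos (S.mem_r_idx (z, y))
            (S.mem_r_idx (z, z0)) (S.mem_r_idx (z0, y)))
        rw [hfe, S.card_xrow, hdvd j hjT]
      · have hfe : (Finset.univ.filter fun z : X => (x, z) ∈ S.r j ∧ S.idx (z, y) ∈ T)
            = ∅ := by
          apply Finset.filter_false_of_mem
          intro z _ hz
          exact hne ⟨z, hz⟩
        rw [hfe]
        simp
end AssocScheme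

/-- Suppose `p ∣ k_i` for every `R_i ∈ S ∖ O_ϑ(S)`. If `S` is `p`-transitive,
then `S = O^ϑ(S)O_ϑ(S)`. -/
theorem cmul_thinResidue_thinRadical_eq_univ_of_isPTransitive
    {X : Type*} [Fintype X] [Nonempty X] {d : ℕ} (S : AssocScheme X d)
    (𝔽 : Type*) [Field 𝔽] (p : ℕ) [Fact p.Prime] [CharP 𝔽 p]
    (hp : ∀ i : Fin (d + 1), i ∉ S.thinRadical → p ∣ S.val i)
    (htr : S.IsPTransitive 𝔽) :
    S.cmul S.thinResidue S.thinRadical = Set.univ := by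
  classical
  obtain ⟨W, -, huniq⟩ := htr
  set T := S.cmul S.thinResidue S.thinRadical with hTdef
  have hclosed := S.TT_closed
  have h1 : S.IsTrivialVector 𝔽 (S.sigma 𝔽 T) := by
    apply S.sigma_trivial
    · exact S.zero_mem_closed hclosed
    · exact fun i hi => S.star_mem_closed hclosed hi
    · exact fun i j k hi hj h => S.mul_mem_closed hclosed hi hj h
    · exact fun j e h => S.thinResidue_subset_TT (S.sq_mem_thinResidue h)
    · intro j hj
      have hj' : j ∉ S.thinRadical := fun h => hj (S.thinRadical_subset_TT h)
      exact (CharP.cast_eq_zero_iff 𝔽 p _).mpr (hp j hj')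
  have h2 : S.IsTrivialVector 𝔽 (S.sigma 𝔽 (Set.univ : Set (Fin (d + 1)))) := by
    apply S.sigma_trivial <;> simp
  have e1 : Submodule.span 𝔽 {S.sigma 𝔽 T} = W := huniq _ ⟨_, h1, rfl⟩
  have e2 : Submodule.span 𝔽 {S.sigma 𝔽 (Set.univ : Set (Fin (d + 1)))} = W :=
    huniq _ ⟨_, h2, rfl⟩
  by_contra hne
  obtain ⟨k, -, hkT⟩ : ∃ k, k ∈ (Set.univ : Set (Fin (d + 1))) ∧ k ∉ T := by
    by_contra hc
    push_neg at hc
    exact hne (Set.eq_univ_of_univ_subset fun k hk => hc k hk)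
  obtain ⟨⟨x, y⟩, hxy⟩ := S.r_nonempty k
  have hmem : S.sigma 𝔽 (Set.univ : Set (Fin (d + 1)))
      ∈ Submodule.span 𝔽 {S.sigma 𝔽 T} := by
    rw [e1, ← e2]
    exact Submodule.mem_span_singleton_self _
  obtain ⟨c, hc⟩ := Submodule.mem_span_singleton.mp hmem
  have hA := congrFun (congrFun hc x) y
  rw [Matrix.smul_apply, smul_eq_mul, S.sigma_apply, S.sigma_apply, S.idx_eq hxy,
    if_neg hkT, mul_zero, if_pos (Set.mem_univ _)] at hA
  exact one_ne_zero hA.symm
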